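/- Let $\sigma \in (1,2)$ and $Q(w) = \frac{1}{\sigma-1} w^{\sigma-2} - \int_0^w (z+1)^{-\sigma}(w-z)^{\sigma-2}\,dz$. Then $0 < Q(w) \le \frac{1}{\sigma-1} w^{\sigma-2}$ for all $0 < w \le 1$, and for every $\varepsilon \in (0, 2-\sigma)$ there exists a constant $C_\varepsilon(\sigma) > 0$ such that $0 < Q(w) \le C_\varepsilon(\sigma)\, w^{-(3-\sigma-\varepsilon)}$ for all $w \ge 1$. Consequently $Q \in L^1(0,\infty)$. -/

import Mathlib

open MeasureTheory Set Real

/-!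
The convolution integral is elementary: `z ↦ -((w - z) / (1 + z)) ^ (σ - 1) / ((σ - 1) (1 + w))`
is an antiderivative of its integrand, so it equals `w ^ (σ - 1) / ((σ - 1) (1 + w))` and
`Q w = w ^ (σ - 2) / ((σ - 1) (1 + w))` exactly. This is at most `w ^ (σ - 2) / (σ - 1)` for all
`w > 0` and at most `w ^ (σ - 3) / (σ - 1)`, so `C = 1 / (σ - 1)` works for every `ε`; the two
bounds are integrable near `0` and near `∞` respectively.
-/

section
variable {σ w : ℝ}

lemma hasDerivAt_neg_rpow_sub_div_one_add (hσ : σ ≠ 1) {z : ℝ} (hz : -1 < z) (hzw : z < w) :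
    HasDerivAt (fun z => -((w - z) / (1 + z)) ^ (σ - 1) / ((σ - 1) * (1 + w)))
      ((z + 1) ^ (-σ) * (w - z) ^ (σ - 2)) z := by
  have hz1 : 0 < 1 + z := by linarith
  have hwz : 0 < w - z := by linarith
  have hquot : HasDerivAt (fun z => (w - z) / (1 + z)) (-(1 + w) / (1 + z) ^ 2) z := by
    refine (((hasDerivAt_id z).const_sub w).div ((hasDerivAt_id z).const_add 1)
      hz1.ne').congr_deriv ?_
    simp only [id]; ring
  refine ((hquot.rpow_const (p := σ - 1) (Or.inl (div_pos hwz hz1).ne')).neg.div_const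
    ((σ - 1) * (1 + w))).congr_deriv ?_
  have hσ1 : σ - 1 ≠ 0 := sub_ne_zero.2 hσ
  have hw1 : 0 < 1 + w := by linarith
  have hpow : (1 + z) ^ σ = (1 + z) ^ (σ - 2) * (1 + z) ^ 2 := by
    rw [← rpow_natCast, ← rpow_add hz1]; norm_num
  rw [show σ - 1 - 1 = σ - 2 by ring, div_rpow hwz.le hz1.le, add_comm z, rpow_neg hz1.le, hpow]
  field_simp

theorem integral_rpow_neg_mul_rpow (hσ : 1 < σ) (hw : 0 ≤ w) :
    ∫ z in (0:ℝ)..w, (z + 1) ^ (-σ) * (w - z) ^ (σ - 2)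
      = w ^ (σ - 1) / ((σ - 1) * (1 + w)) := by
  have hcont : ContinuousOn (fun z => -((w - z) / (1 + z)) ^ (σ - 1) / ((σ - 1) * (1 + w)))
      (Icc 0 w) := by
    refine ((ContinuousOn.rpow_const ?_ fun _ _ => Or.inr (by linarith)).neg).div_const _
    exact (continuousOn_const.sub continuousOn_id).div (continuousOn_const.add continuousOn_id)
      fun z hz => by linarith [hz.1]
  have hint : IntervalIntegrable (fun z => (z + 1) ^ (-σ) * (w - z) ^ (σ - 2)) volume 0 w := by
    have hsing : IntervalIntegrable (fun z => (w - z) ^ (σ - 2)) volume 0 w := by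
      simpa using ((intervalIntegral.intervalIntegrable_rpow' (a := 0) (b := w) (r := σ - 2)
        (by linarith)).comp_sub_left w).symm
    refine hsing.continuousOn_mul (ContinuousOn.rpow_const (by fun_prop) fun z hz => Or.inl ?_)
    rw [uIcc_of_le hw] at hz
    linarith [hz.1]
  have hderiv (z : ℝ) (hz : z ∈ Ioo 0 w) := (hasDerivAt_neg_rpow_sub_div_one_add hσ.ne'
    (by linarith [hz.1]) hz.2).hasDerivWithinAt (s := Ioi z)
  rw [intervalIntegral.integral_eq_sub_of_hasDeriv_right_of_le hw hcont hderiv hint]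
  simp only [sub_self, zero_div, zero_rpow (sub_pos.2 hσ).ne', sub_zero, add_zero, div_one]
  ring

end

section
variable {p w : ℝ}

lemma rpow_div_one_add_le_rpow (hw : 0 < w) : w ^ p / (1 + w) ≤ w ^ p :=
  div_le_self (rpow_nonneg hw.le p) (by linarith)

lemma rpow_div_one_add_le_rpow_sub_one (hw : 0 < w) : w ^ p / (1 + w) ≤ w ^ (p - 1) := by
  rw [rpow_sub_one hw.ne']
  exact div_le_div_of_nonneg_left (rpow_nonneg hw.le p) hw (by linarith)

theorem integrableOn_Ioi_rpow_div_one_add (hp₁ : -1 < p) (hp₀ : p < 0) :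
    IntegrableOn (fun w : ℝ => w ^ p / (1 + w)) (Ioi 0) := by
  have hcont : ContinuousOn (fun w : ℝ => w ^ p / (1 + w)) (Ioi 0) :=
    (continuousOn_id.rpow_const fun w hw => Or.inl (ne_of_gt hw)).div
      (continuousOn_const.add continuousOn_id) fun w hw => by linarith [mem_Ioi.1 hw]
  rw [← Ioc_union_Ioi_eq_Ioi zero_le_one]
  refine IntegrableOn.union ?_ ?_
  · have hdom : IntegrableOn (fun w : ℝ => w ^ p) (Ioc 0 1) :=
      (intervalIntegrable_iff_integrableOn_Ioc_of_le zero_le_one).1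
        (intervalIntegral.intervalIntegrable_rpow' hp₁)
    refine hdom.mono' ((hcont.mono Ioc_subset_Ioi_self).aestronglyMeasurable measurableSet_Ioc) ?_
    filter_upwards [ae_restrict_mem measurableSet_Ioc] with w hw
    have hw₀ := hw.1
    rw [norm_of_nonneg (by positivity)]
    exact rpow_div_one_add_le_rpow hw₀
  · have hdom : IntegrableOn (fun w : ℝ => w ^ (p - 1)) (Ioi 1) :=
      integrableOn_Ioi_rpow_of_lt (by linarith) one_pos
    refine hdom.mono' ((hcont.mono (Ioi_subset_Ioi zero_le_one)).aestronglyMeasurable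
      measurableSet_Ioi) ?_
    filter_upwards [ae_restrict_mem measurableSet_Ioi] with w hw
    have hw₀ : 0 < w := zero_lt_one.trans hw
    rw [norm_of_nonneg (by positivity)]
    exact rpow_div_one_add_le_rpow_sub_one hw₀

end

theorem stmt4 (σ : ℝ) (hσ : σ ∈ Ioo (1:ℝ) 2) (Q : ℝ → ℝ)
    (hQ : ∀ w : ℝ, 0 < w →
      Q w = (1 / (σ - 1)) * w ^ (σ - 2)
        - ∫ z in (0:ℝ)..w, (z + 1) ^ (-σ) * (w - z) ^ (σ - 2)) :
    (∀ w : ℝ, 0 < w → w ≤ 1 → 0 < Q w ∧ Q w ≤ (1 / (σ - 1)) * w ^ (σ - 2)) ∧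
    (∀ ε : ℝ, ε ∈ Ioo 0 (2 - σ) → ∃ C > (0:ℝ), ∀ w : ℝ, 1 ≤ w →
      0 < Q w ∧ Q w ≤ C * w ^ (-(3 - σ - ε))) ∧
    IntegrableOn Q (Ioi (0:ℝ)) volume := by
  obtain ⟨hσ₁, hσ₂⟩ := hσ
  have hC : 0 < 1 / (σ - 1) := one_div_pos.2 (sub_pos.2 hσ₁)
  have hQ_eq : ∀ w, 0 < w → Q w = 1 / (σ - 1) * (w ^ (σ - 2) / (1 + w)) := fun w hw => by
    rw [hQ w hw, integral_rpow_neg_mul_rpow hσ₁ hw.le, show σ - 1 = σ - 2 + 1 by ring,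
      rpow_add_one hw.ne']
    field_simp
    ring
  have hQ_pos : ∀ w, 0 < w → 0 < Q w := fun w hw => by rw [hQ_eq w hw]; positivity
  refine ⟨fun w hw _ => ⟨hQ_pos w hw, ?_⟩,
    fun ε hε => ⟨1 / (σ - 1), hC, fun w hw => ⟨hQ_pos w (by linarith), ?_⟩⟩, ?_⟩
  · rw [hQ_eq w hw]
    exact mul_le_mul_of_nonneg_left (rpow_div_one_add_le_rpow hw) hC.le
  · rw [hQ_eq w (by linarith)]
    calc 1 / (σ - 1) * (w ^ (σ - 2) / (1 + w)) ≤ 1 / (σ - 1) * w ^ (σ - 2 - 1) :=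
          mul_le_mul_of_nonneg_left (rpow_div_one_add_le_rpow_sub_one (by linarith)) hC.le
      _ ≤ 1 / (σ - 1) * w ^ (-(3 - σ - ε)) :=
          mul_le_mul_of_nonneg_left (rpow_le_rpow_of_exponent_le hw (by linarith [hε.1])) hC.le
  · refine IntegrableOn.congr_fun ?_ (fun w hw => (hQ_eq w hw).symm) measurableSet_Ioi
    exact (integrableOn_Ioi_rpow_div_one_add (p := σ - 2) (by linarith) (by linarith)).const_mul _
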